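/- arXiv:0711.4948 — 3 statements merged into one kernel-verified Lean document; each statement's English description precedes it below -/
import Mathlib

section
/- Generalized Russo's formula: let A⁺ be increasing and A⁻ decreasing, both depending only on sites in a finite set S, and let (p̂_v(t))_{v∈S} be differentiable functions of t ∈ [0,1] with associated product measures P̂_t. Then d/dt P̂_t(A⁺ ∩ A⁻) = Σ_{v∈S} (d/dt p̂_v(t)) [ P̂_t(v is pivotal for A⁺ but not for A⁻, and A⁻ occurs) − P̂_t(v is pivotal for A⁻ but not for A⁺, and A⁺ occurs) ]. -/
/-- The weight of a configuration `ω : V → Bool` under independent site percolation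
where site `v` is open (`true`) with probability `p v`. -/
def configWeight {V : Type*} [Fintype V] (p : V → ℝ) (ω : V → Bool) : ℝ :=
  ∏ v, if ω v then p v else 1 - p v

open Classical in
/-- The probability of an event `A` under the product Bernoulli measure with
site-dependent parameters `p`. -/
noncomputable def prodProb {V : Type*} [Fintype V] [DecidableEq V]
    (p : V → ℝ) (A : Set (V → Bool)) : ℝ :=
  ∑ ω : V → Bool, if ω ∈ A then configWeight p ω else 0

/-- An event is increasing if it is preserved by turning closed sites open. -/
def IncreasingEvent {V : Type*} (A : Set (V → Bool)) : Prop :=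
  ∀ ω ω' : V → Bool, (∀ v, ω v = true → ω' v = true) → ω ∈ A → ω' ∈ A

/-- An event is decreasing if it is preserved by turning open sites closed. -/
def DecreasingEvent {V : Type*} (A : Set (V → Bool)) : Prop :=
  ∀ ω ω' : V → Bool, (∀ v, ω' v = true → ω v = true) → ω ∈ A → ω' ∈ A

/-- `v` is pivotal for the event `B` in configuration `ω` if exactly one of the two
configurations obtained by setting `v` open or closed lies in `B`. -/
def pivotal {V : Type*} [DecidableEq V] (B : Set (V → Bool)) (v : V) :
    Set (V → Bool) :=
  {ω | Xor' (Function.update ω v true ∈ B) (Function.update ω v false ∈ B)}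

section Aux

variable {V : Type*} [Fintype V] [DecidableEq V]

/-- Restricted weight: product over all sites except `v`. -/
noncomputable def Wrest (p : V → ℝ) (v : V) (ω : V → Bool) : ℝ :=
  ∏ w ∈ Finset.univ.erase v, if ω w then p w else 1 - p w

lemma configWeight_eq_mul (p : V → ℝ) (v : V) (ω : V → Bool) :
    configWeight p ω = (if ω v then p v else 1 - p v) * Wrest p v ω := by
  rw [configWeight, Wrest, ← Finset.mul_prod_erase _ _ (Finset.mem_univ v)]

lemma Wrest_update (p : V → ℝ) (v : V) (ω : V → Bool) (b : Bool) :
    Wrest p v (Function.update ω v b) = Wrest p v ω := by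
  unfold Wrest
  refine Finset.prod_congr rfl fun w hw => ?_
  rw [Function.update_of_ne (Finset.ne_of_mem_erase hw)]

/-- The equivalence flipping the value at site `v`. -/
def flipEquiv (v : V) : (V → Bool) ≃ (V → Bool) where
  toFun ω := Function.update ω v (!ω v)
  invFun ω := Function.update ω v (!ω v)
  left_inv ω := by
    simp [Function.update_idem, Function.update_self, Bool.not_not,
      Function.update_eq_self]
  right_inv ω := by
    simp [Function.update_idem, Function.update_self, Bool.not_not,
      Function.update_eq_self]

open Classical in
/-- Key combinatorial identity behind Russo's formula (per site). -/
lemma russo_key (p : V → ℝ) (v : V) (Ap Am : Set (V → Bool))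
    (hAp : IncreasingEvent Ap) (hAm : DecreasingEvent Am) :
    ∑ ω : V → Bool,
        (if ω ∈ Ap ∩ Am then (if ω v then 1 else -1) * Wrest p v ω else 0)
      = prodProb p (pivotal Ap v ∩ (pivotal Am v)ᶜ ∩ Am)
        - prodProb p (pivotal Am v ∩ (pivotal Ap v)ᶜ ∩ Ap) := by
  set F : (V → Bool) → ℝ := fun ω =>
    if ω ∈ Ap ∩ Am then (if ω v then 1 else -1) * Wrest p v ω else 0 with hF
  set G : (V → Bool) → ℝ := fun ω =>
    (if ω ∈ pivotal Ap v ∩ (pivotal Am v)ᶜ ∩ Am then configWeight p ω else 0)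
    - (if ω ∈ pivotal Am v ∩ (pivotal Ap v)ᶜ ∩ Ap then configWeight p ω else 0)
    with hG
  have key : ∀ ω : V → Bool, F ω + F (flipEquiv v ω) = G ω + G (flipEquiv v ω) := by
    intro ω
    -- notation
    set σ := flipEquiv v ω with hσ
    have hσv : σ v = !ω v := by simp [hσ, flipEquiv]
    have hupd : ∀ b : Bool, Function.update σ v b = Function.update ω v b := by
      intro b; simp [hσ, flipEquiv, Function.update_idem]
    have hWσ : Wrest p v σ = Wrest p v ω := Wrest_update p v ω (!ω v)
    have hba : Function.update ω v false ∈ Ap → Function.update ω v true ∈ Ap := by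
      intro h
      refine hAp _ _ (fun w hw => ?_) h
      by_cases hwv : w = v
      · subst hwv; simp [Function.update_self]
      · rw [Function.update_of_ne hwv] at hw ⊢; exact hw
    have hcd : Function.update ω v true ∈ Am → Function.update ω v false ∈ Am := by
      intro h
      refine hAm _ _ (fun w hw => ?_) h
      by_cases hwv : w = v
      · subst hwv; simp [Function.update_self] at hw
      · rw [Function.update_of_ne hwv] at hw ⊢; exact hw
    -- pivotal membership only depends on the pair
    have hpiv : ∀ B : Set (V → Bool), σ ∈ pivotal B v ↔ ω ∈ pivotal B v := by
      intro B; simp [pivotal, hupd]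
    -- case on ω v
    cases hv : ω v
    · -- ω v = false : ω = update ω v false, σ = update ω v true
      have hω : ω = Function.update ω v false := by
        conv_lhs => rw [← Function.update_eq_self v ω]
        rw [hv]
      have hσω : σ = Function.update ω v true := by
        simp [hσ, flipEquiv, hv]
      have hσv' : σ v = true := by rw [hσv, hv]; rfl
      have hcWω : configWeight p ω = (1 - p v) * Wrest p v ω := by
        rw [configWeight_eq_mul p v ω, hv]; simp
      have hcWσ : configWeight p σ = p v * Wrest p v ω := by
        rw [configWeight_eq_mul p v σ, hσv', hWσ]; simp
      have e1 : (ω ∈ Ap) = (Function.update ω v false ∈ Ap) := by rw [← hω]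
      have e2 : (ω ∈ Am) = (Function.update ω v false ∈ Am) := by rw [← hω]
      have e3 : (σ ∈ Ap) = (Function.update ω v true ∈ Ap) := by rw [hσω]
      have e4 : (σ ∈ Am) = (Function.update ω v true ∈ Am) := by rw [hσω]
      simp only [hF, hG, Set.mem_inter_iff, Set.mem_compl_iff, hpiv, hv, hσv',
        pivotal, Set.mem_setOf_eq, e1, e2, e3, e4]
      rw [hcWω, hcWσ, hWσ]
      clear hω hσω
      by_cases ha : Function.update ω v true ∈ Ap <;>
      by_cases hb : Function.update ω v false ∈ Ap <;>
      by_cases hc : Function.update ω v true ∈ Am <;>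
      by_cases hd : Function.update ω v false ∈ Am <;>
        simp_all [Xor'] <;> ring
    · -- ω v = true : ω = update ω v true, σ = update ω v false
      have hω : ω = Function.update ω v true := by
        conv_lhs => rw [← Function.update_eq_self v ω]
        rw [hv]
      have hσω : σ = Function.update ω v false := by
        simp [hσ, flipEquiv, hv]
      have hσv' : σ v = false := by rw [hσv, hv]; rfl
      have hcWω : configWeight p ω = p v * Wrest p v ω := by
        rw [configWeight_eq_mul p v ω, hv]; simp
      have hcWσ : configWeight p σ = (1 - p v) * Wrest p v ω := by
        rw [configWeight_eq_mul p v σ, hσv', hWσ]; simp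
      have e1 : (ω ∈ Ap) = (Function.update ω v true ∈ Ap) := by rw [← hω]
      have e2 : (ω ∈ Am) = (Function.update ω v true ∈ Am) := by rw [← hω]
      have e3 : (σ ∈ Ap) = (Function.update ω v false ∈ Ap) := by rw [hσω]
      have e4 : (σ ∈ Am) = (Function.update ω v false ∈ Am) := by rw [hσω]
      simp only [hF, hG, Set.mem_inter_iff, Set.mem_compl_iff, hpiv, hv, hσv',
        pivotal, Set.mem_setOf_eq, e1, e2, e3, e4]
      rw [hcWω, hcWσ, hWσ]
      clear hω hσω
      by_cases ha : Function.update ω v true ∈ Ap <;>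
      by_cases hb : Function.update ω v false ∈ Ap <;>
      by_cases hc : Function.update ω v true ∈ Am <;>
      by_cases hd : Function.update ω v false ∈ Am <;>
        simp_all [Xor'] <;> ring
  have hsumF : ∑ ω, F ((flipEquiv v) ω) = ∑ ω, F ω := Equiv.sum_comp (flipEquiv v) F
  have hsumG : ∑ ω, G ((flipEquiv v) ω) = ∑ ω, G ω := Equiv.sum_comp (flipEquiv v) G
  have h2 : (2 : ℝ) * ∑ ω, F ω = 2 * ∑ ω, G ω := by
    calc (2 : ℝ) * ∑ ω, F ω = ∑ ω, F ω + ∑ ω, F (flipEquiv v ω) := by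
          rw [hsumF]; ring
      _ = ∑ ω, (F ω + F (flipEquiv v ω)) := by rw [Finset.sum_add_distrib]
      _ = ∑ ω, (G ω + G (flipEquiv v ω)) := Finset.sum_congr rfl fun ω _ => key ω
      _ = ∑ ω, G ω + ∑ ω, G (flipEquiv v ω) := by rw [Finset.sum_add_distrib]
      _ = 2 * ∑ ω, G ω := by rw [hsumG]; ring
  have hFG : ∑ ω, F ω = ∑ ω, G ω := by linarith
  rw [hFG, hG]
  rw [Finset.sum_sub_distrib]
  congr 1 <;>
  · unfold prodProb
    exact Finset.sum_congr rfl fun ω _ => by congr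

open Classical in
lemma hasDeriv_configWeight (phat phat' : V → ℝ → ℝ) (t : ℝ)
    (hd : ∀ v, HasDerivWithinAt (phat v) (phat' v t) (Set.Icc (0:ℝ) 1) t)
    (ω : V → Bool) :
    HasDerivWithinAt (fun s => configWeight (fun v => phat v s) ω)
      (∑ v : V, (if ω v then 1 else -1) * phat' v t * Wrest (fun v => phat v t) v ω)
      (Set.Icc (0:ℝ) 1) t := by
  have h := HasDerivWithinAt.fun_finsetProd (𝕜 := ℝ) (u := Finset.univ)
    (f := fun v s => if ω v then phat v s else 1 - phat v s)
    (f' := fun v => if ω v then phat' v t else -(phat' v t))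
    (s := Set.Icc (0:ℝ) 1) (x := t) (fun v _ => by
      cases hv : ω v
      · simpa [hv] using (hd v).const_sub (1:ℝ)
      · simpa [hv] using hd v)
  refine HasDerivWithinAt.congr_deriv (f := fun s => configWeight (fun v => phat v s) ω) h ?_
  refine Finset.sum_congr rfl fun v _ => ?_
  cases hv : ω v <;> simp [Wrest, hv, smul_eq_mul] <;> ring

end Aux

/-- generalized Russo's formula: with `A⁺` increasing, `A⁻` decreasing,
and differentiable parameters `t ↦ p̂_v(t)` on `[0,1]`, the derivative of
`t ↦ P̂_t(A⁺ ∩ A⁻)` is the stated signed sum over sites. -/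
theorem generalized_russo
    {V : Type*} [Fintype V] [DecidableEq V]
    (phat phat' : V → ℝ → ℝ)
    (hderiv : ∀ v : V, ∀ t ∈ Set.Icc (0 : ℝ) 1,
      HasDerivWithinAt (phat v) (phat' v t) (Set.Icc (0 : ℝ) 1) t)
    (hrange : ∀ v : V, ∀ t ∈ Set.Icc (0 : ℝ) 1, phat v t ∈ Set.Icc (0 : ℝ) 1)
    (Ap Am : Set (V → Bool)) (hAp : IncreasingEvent Ap) (hAm : DecreasingEvent Am)
    (t : ℝ) (ht : t ∈ Set.Icc (0 : ℝ) 1) :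
    HasDerivWithinAt (fun s : ℝ => prodProb (fun v => phat v s) (Ap ∩ Am))
      (∑ v : V, phat' v t *
        (prodProb (fun v => phat v t) (pivotal Ap v ∩ (pivotal Am v)ᶜ ∩ Am)
          - prodProb (fun v => phat v t) (pivotal Am v ∩ (pivotal Ap v)ᶜ ∩ Ap)))
      (Set.Icc (0 : ℝ) 1) t := by
  classical
  have hd : ∀ v, HasDerivWithinAt (phat v) (phat' v t) (Set.Icc (0:ℝ) 1) t :=
    fun v => hderiv v t ht
  set D : (V → Bool) → ℝ := fun ω =>
    if ω ∈ Ap ∩ Am then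
      ∑ v : V, (if ω v then 1 else -1) * phat' v t * Wrest (fun v => phat v t) v ω
    else 0 with hD
  have hmain : HasDerivWithinAt
      (fun s : ℝ => prodProb (fun v => phat v s) (Ap ∩ Am))
      (∑ ω : V → Bool, D ω) (Set.Icc (0:ℝ) 1) t := by
    have : HasDerivWithinAt
        (fun s : ℝ => ∑ ω : V → Bool,
          (if ω ∈ Ap ∩ Am then configWeight (fun v => phat v s) ω else 0))
        (∑ ω : V → Bool, D ω) (Set.Icc (0:ℝ) 1) t := by
      refine HasDerivWithinAt.fun_sum fun ω _ => ?_
      by_cases hω : ω ∈ Ap ∩ Am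
      · simp only [hD, if_pos hω]
        exact hasDeriv_configWeight phat phat' t hd ω
      · simp only [hD, if_neg hω]
        exact hasDerivWithinAt_const t _ (0:ℝ)
    have hfun : (fun s : ℝ => prodProb (fun v => phat v s) (Ap ∩ Am))
        = (fun s : ℝ => ∑ ω : V → Bool,
            (if ω ∈ Ap ∩ Am then configWeight (fun v => phat v s) ω else 0)) := by
      funext s
      unfold prodProb
      exact Finset.sum_congr rfl fun ω _ => by congr
    rw [hfun]
    exact this
  have heq : ∑ ω : V → Bool, D ω
      = ∑ v : V, phat' v t *
        (prodProb (fun v => phat v t) (pivotal Ap v ∩ (pivotal Am v)ᶜ ∩ Am)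
          - prodProb (fun v => phat v t) (pivotal Am v ∩ (pivotal Ap v)ᶜ ∩ Ap)) := by
    have h1 : ∑ ω : V → Bool, D ω = ∑ v : V, ∑ ω : V → Bool,
        (if ω ∈ Ap ∩ Am then
          (if ω v then 1 else -1) * phat' v t * Wrest (fun v => phat v t) v ω
        else 0) := by
      rw [Finset.sum_comm]
      refine Finset.sum_congr rfl fun ω _ => ?_
      by_cases hω : ω ∈ Ap ∩ Am
      · rw [hD]
        simp only [if_pos hω]
      · rw [hD]
        simp only [if_neg hω, Finset.sum_const_zero]
    rw [h1]
    refine Finset.sum_congr rfl fun v _ => ?_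
    have h2 : ∑ ω : V → Bool,
        (if ω ∈ Ap ∩ Am then
          (if ω v then 1 else -1) * phat' v t * Wrest (fun v => phat v t) v ω
        else 0)
      = phat' v t * ∑ ω : V → Bool,
        (if ω ∈ Ap ∩ Am then
          (if ω v then 1 else -1) * Wrest (fun v => phat v t) v ω
        else 0) := by
      rw [Finset.mul_sum]
      refine Finset.sum_congr rfl fun ω _ => ?_
      by_cases hω : ω ∈ Ap ∩ Am <;> simp [hω] <;> ring
    rw [h2, russo_key (fun v => phat v t) v Ap Am hAp hAm]
  exact heq ▸ hmain
end

section
/- Local FKG inequality: let A⁺, Ã⁺ be increasing events and A⁻, Ã⁻ be decreasing events on a product space, and suppose there exist three pairwise disjoint finite sets of sites 𝒜, 𝒜⁺, 𝒜⁻ such that A⁺ depends only on sites in 𝒜 ∪ 𝒜⁺, A⁻ only on 𝒜 ∪ 𝒜⁻, Ã⁺ only on 𝒜⁺, and Ã⁻ only on 𝒜⁻. Then for any product measure P̂ with P̂(A⁺ ∩ A⁻) > 0, P̂(Ã⁺ ∩ Ã⁻ | A⁺ ∩ A⁻) ≥ P̂(Ã⁺) · P̂(Ã⁻). -/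
set_option linter.unusedSectionVars false

/-- An event depends only on the sites in `T` if its occurrence is determined by
the configuration restricted to `T`. -/
def DependsOnSites {V : Type*} (A : Set (V → Bool)) (T : Finset V) : Prop :=
  ∀ ω ω' : V → Bool, (∀ v ∈ T, ω v = ω' v) → (ω ∈ A ↔ ω' ∈ A)

section helpers
variable {V : Type*} [Fintype V] [DecidableEq V]

lemma configWeight_nonneg (p : V → ℝ) (hp : ∀ v, p v ∈ Set.Icc (0 : ℝ) 1) (ω : V → Bool) :
    0 ≤ configWeight p ω :=
  Finset.prod_nonneg fun v _ => by rcases hp v with ⟨h0, h1⟩; split <;> linarith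

lemma sum_configWeight (p : V → ℝ) : ∑ ω : V → Bool, configWeight p ω = 1 := by
  have := Finset.prod_univ_sum (fun _ : V => (Finset.univ : Finset Bool))
    (fun v b => if b then p v else 1 - p v)
  rw [Fintype.piFinset_univ] at this
  unfold configWeight
  rw [← this, ← Finset.prod_const_one (s := (Finset.univ : Finset V))]
  exact Finset.prod_congr rfl fun v _ => by simp

/-- the configuration equal to `ω` on `S` and to `η` off `S`. -/
def mergeOn (S : Finset V) (ω η : V → Bool) : V → Bool := fun v => if v ∈ S then ω v else η v

lemma mergeOn_mergeOn (S : Finset V) (ω η : V → Bool) :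
    mergeOn S (mergeOn S ω η) (mergeOn S η ω) = ω := by
  funext v; unfold mergeOn; by_cases h : v ∈ S <;> simp [h]

lemma configWeight_mergeOn_mul (p : V → ℝ) (S : Finset V) (ω η : V → Bool) :
    configWeight p (mergeOn S ω η) * configWeight p (mergeOn S η ω)
      = configWeight p ω * configWeight p η := by
  unfold configWeight mergeOn
  rw [← Finset.prod_mul_distrib, ← Finset.prod_mul_distrib]
  exact Finset.prod_congr rfl fun v _ => by by_cases h : v ∈ S <;> simp [h, mul_comm]

lemma resample (p : V → ℝ) (S : Finset V) (f : (V → Bool) → ℝ) :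
    ∑ x : (V → Bool) × (V → Bool),
        configWeight p x.1 * configWeight p x.2 * f (mergeOn S x.1 x.2)
      = ∑ ω : V → Bool, configWeight p ω * f ω := by
  have hΦ : Function.Involutive
      (fun x : (V → Bool) × (V → Bool) => (mergeOn S x.1 x.2, mergeOn S x.2 x.1)) := by
    intro x
    exact Prod.ext (mergeOn_mergeOn S x.1 x.2) (mergeOn_mergeOn S x.2 x.1)
  calc ∑ x : (V → Bool) × (V → Bool),
        configWeight p x.1 * configWeight p x.2 * f (mergeOn S x.1 x.2)
      = ∑ x : (V → Bool) × (V → Bool),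
        configWeight p x.1 * configWeight p x.2 * f x.1 := by
        rw [← Equiv.sum_comp hΦ.toPerm
          (fun x : (V → Bool) × (V → Bool) =>
            configWeight p x.1 * configWeight p x.2 * f (mergeOn S x.1 x.2))]
        refine Finset.sum_congr rfl fun x _ => ?_
        show configWeight p (mergeOn S x.1 x.2) * configWeight p (mergeOn S x.2 x.1) *
            f (mergeOn S (mergeOn S x.1 x.2) (mergeOn S x.2 x.1)) = _
        rw [configWeight_mergeOn_mul, mergeOn_mergeOn]
    _ = ∑ ω : V → Bool, configWeight p ω * f ω := by
        rw [Fintype.sum_prod_type]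
        refine Finset.sum_congr rfl fun ω _ => ?_
        rw [Finset.sum_congr rfl fun η _ => by
          show configWeight p ω * configWeight p η * f ω
            = configWeight p ω * f ω * configWeight p η
          ring]
        rw [← Finset.mul_sum, sum_configWeight, mul_one]

lemma mul_wt_inf_sup {L : Type*} [LinearOrder L] (w : L → ℝ) (x y : L) :
    w x * w y = w (x ⊓ y) * w (x ⊔ y) := by
  rcases le_total x y with h | h
  · rw [inf_eq_left.mpr h, sup_eq_right.mpr h]
  · rw [inf_eq_right.mpr h, sup_eq_left.mpr h, mul_comm]

lemma harris (p : V → ℝ) (hp : ∀ v, p v ∈ Set.Icc (0 : ℝ) 1) (D : Finset V)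
    (a b : (V → Bool) → ℝ) (ha0 : ∀ ω, 0 ≤ a ω) (hb0 : ∀ ω, 0 ≤ b ω)
    (ha : ∀ ω ω' : V → Bool, (∀ v, v ∉ D → ω v = true → ω' v = true) →
      (∀ v, v ∈ D → ω' v = true → ω v = true) → a ω ≤ a ω')
    (hb : ∀ ω ω' : V → Bool, (∀ v, v ∉ D → ω v = true → ω' v = true) →
      (∀ v, v ∈ D → ω' v = true → ω v = true) → b ω ≤ b ω') :
    (∑ ω : V → Bool, configWeight p ω * a ω) * (∑ ω : V → Bool, configWeight p ω * b ω)
      ≤ ∑ ω : V → Bool, configWeight p ω * (a ω * b ω) := by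
  classical
  let e : (({v : V // v ∈ D} → Boolᵒᵈ) × ({v : V // v ∉ D} → Bool)) ≃ (V → Bool) :=
    { toFun := fun σ v => if h : v ∈ D then OrderDual.ofDual (σ.1 ⟨v, h⟩) else σ.2 ⟨v, h⟩
      invFun := fun ω => (fun u => OrderDual.toDual (ω u.1), fun u => ω u.1)
      left_inv := by
        intro σ
        refine Prod.ext (funext fun u => ?_) (funext fun u => ?_)
        · simp only [dif_pos u.2]; rfl
        · simp only [dif_neg u.2]
      right_inv := by
        intro ω; funext v; by_cases h : v ∈ D
        · simp only [dif_pos h]; rfl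
        · simp only [dif_neg h] }
  have etrans : ∀ g : (V → Bool) → ℝ,
      ∑ σ : ({v : V // v ∈ D} → Boolᵒᵈ) × ({v : V // v ∉ D} → Bool),
        configWeight p (e σ) * g (e σ) = ∑ ω : V → Bool, configWeight p ω * g ω :=
    fun g => Equiv.sum_comp e fun ω => configWeight p ω * g ω
  have hmono : ∀ (c : (V → Bool) → ℝ),
      (∀ ω ω' : V → Bool, (∀ v, v ∉ D → ω v = true → ω' v = true) →
        (∀ v, v ∈ D → ω' v = true → ω v = true) → c ω ≤ c ω') →
      Monotone fun σ => c (e σ) := by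
    intro c hc σ σ' hle
    refine hc (e σ) (e σ') (fun v hv h1 => ?_) (fun v hv h1 => ?_)
    · show (if h : v ∈ D then OrderDual.ofDual (σ'.1 ⟨v, h⟩) else σ'.2 ⟨v, h⟩) = true
      rw [dif_neg hv]
      rw [show e σ v = σ.2 ⟨v, hv⟩ from dif_neg hv] at h1
      exact Bool.le_iff_imp.mp (hle.2 ⟨v, hv⟩) h1
    · show (if h : v ∈ D then OrderDual.ofDual (σ.1 ⟨v, h⟩) else σ.2 ⟨v, h⟩) = true
      rw [dif_pos hv]
      rw [show e σ' v = OrderDual.ofDual (σ'.1 ⟨v, hv⟩) from dif_pos hv] at h1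
      exact Bool.le_iff_imp.mp (OrderDual.ofDual_le_ofDual.mpr (hle.1 ⟨v, hv⟩)) h1
  have hμ : ∀ σ σ' : ({v : V // v ∈ D} → Boolᵒᵈ) × ({v : V // v ∉ D} → Bool),
      configWeight p (e σ) * configWeight p (e σ')
        ≤ configWeight p (e (σ ⊓ σ')) * configWeight p (e (σ ⊔ σ')) := by
    intro σ σ'
    apply le_of_eq
    unfold configWeight
    rw [← Finset.prod_mul_distrib, ← Finset.prod_mul_distrib]
    refine Finset.prod_congr rfl fun v _ => ?_
    by_cases h : v ∈ D
    · have h1 : ∀ τ : ({v : V // v ∈ D} → Boolᵒᵈ) × ({v : V // v ∉ D} → Bool),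
          e τ v = OrderDual.ofDual (τ.1 ⟨v, h⟩) := fun τ => dif_pos h
      rw [h1, h1, h1, h1]
      have h2 : (σ ⊓ σ').1 ⟨v, h⟩ = σ.1 ⟨v, h⟩ ⊓ σ'.1 ⟨v, h⟩ := rfl
      have h3 : (σ ⊔ σ').1 ⟨v, h⟩ = σ.1 ⟨v, h⟩ ⊔ σ'.1 ⟨v, h⟩ := rfl
      rw [h2, h3]
      exact mul_wt_inf_sup (fun x : Boolᵒᵈ =>
        if OrderDual.ofDual x then p v else 1 - p v) _ _
    · have h1 : ∀ τ : ({v : V // v ∈ D} → Boolᵒᵈ) × ({v : V // v ∉ D} → Bool),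
          e τ v = τ.2 ⟨v, h⟩ := fun τ => dif_neg h
      rw [h1, h1, h1, h1]
      have h2 : (σ ⊓ σ').2 ⟨v, h⟩ = σ.2 ⟨v, h⟩ ⊓ σ'.2 ⟨v, h⟩ := rfl
      have h3 : (σ ⊔ σ').2 ⟨v, h⟩ = σ.2 ⟨v, h⟩ ⊔ σ'.2 ⟨v, h⟩ := rfl
      rw [h2, h3]
      exact mul_wt_inf_sup (fun x : Bool => if x then p v else 1 - p v) _ _
  have key := fkg (μ := fun σ => configWeight p (e σ)) (f := fun σ => a (e σ))
    (g := fun σ => b (e σ)) (fun σ => configWeight_nonneg p hp (e σ))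
    (fun σ => ha0 (e σ)) (fun σ => hb0 (e σ)) (hmono a ha) (hmono b hb) hμ
  rw [etrans a, etrans b] at key
  rw [etrans fun ω => a ω * b ω] at key
  rw [show ∑ σ : ({v : V // v ∈ D} → Boolᵒᵈ) × ({v : V // v ∉ D} → Bool),
      configWeight p (e σ) = 1 from by
    rw [Equiv.sum_comp e fun ω => configWeight p ω, sum_configWeight], one_mul] at key
  exact key

open Classical in
/-- The indicator function of an event. -/
noncomputable def evInd (A : Set (V → Bool)) (ω : V → Bool) : ℝ :=
  if ω ∈ A then 1 else 0

lemma evInd_nonneg (A : Set (V → Bool)) (ω : V → Bool) : 0 ≤ evInd A ω := by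
  unfold evInd; split <;> norm_num

lemma evInd_le {A : Set (V → Bool)} {ω ω' : V → Bool} (h : ω ∈ A → ω' ∈ A) :
    evInd A ω ≤ evInd A ω' := by
  unfold evInd
  by_cases hω : ω ∈ A
  · rw [if_pos hω, if_pos (h hω)]
  · rw [if_neg hω]; split <;> norm_num

lemma evInd_congr {A : Set (V → Bool)} {ω ω' : V → Bool} (h : ω ∈ A ↔ ω' ∈ A) :
    evInd A ω = evInd A ω' := by
  unfold evInd
  by_cases hω : ω ∈ A
  · rw [if_pos hω, if_pos (h.mp hω)]
  · rw [if_neg hω, if_neg (fun h' => hω (h.mpr h'))]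

lemma evInd_inter (A B : Set (V → Bool)) (ω : V → Bool) :
    evInd (A ∩ B) ω = evInd A ω * evInd B ω := by
  unfold evInd
  by_cases hA : ω ∈ A <;> by_cases hB : ω ∈ B <;>
    simp [hA, hB, Set.mem_inter_iff]

lemma prodProb_eq (p : V → ℝ) (A : Set (V → Bool)) :
    prodProb p A = ∑ ω : V → Bool, configWeight p ω * evInd A ω := by
  unfold prodProb
  refine Finset.sum_congr rfl fun ω _ => ?_
  unfold evInd
  by_cases h : ω ∈ A <;> simp [h]

end helpers

/-- local FKG inequality: with `A⁺, Ã⁺` increasing, `A⁻, Ã⁻` decreasing,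
depending respectively on the pairwise disjoint site sets `𝒜 ∪ 𝒜⁺`, `𝒜 ∪ 𝒜⁻`, `𝒜⁺`, `𝒜⁻`,
one has `P̂(Ã⁺ ∩ Ã⁻ | A⁺ ∩ A⁻) ≥ P̂(Ã⁺) P̂(Ã⁻)` for any product measure `P̂` giving
positive probability to `A⁺ ∩ A⁻`. -/
theorem local_fkg
    {V : Type*} [Fintype V] [DecidableEq V]
    (p : V → ℝ) (hp : ∀ v, p v ∈ Set.Icc (0 : ℝ) 1)
    (𝒜 𝒜p 𝒜m : Finset V)
    (hd1 : Disjoint 𝒜 𝒜p) (hd2 : Disjoint 𝒜 𝒜m) (hd3 : Disjoint 𝒜p 𝒜m)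
    (Ap Am Bp Bm : Set (V → Bool))
    (hAp : IncreasingEvent Ap) (hAm : DecreasingEvent Am)
    (hBp : IncreasingEvent Bp) (hBm : DecreasingEvent Bm)
    (hdAp : DependsOnSites Ap (𝒜 ∪ 𝒜p)) (hdAm : DependsOnSites Am (𝒜 ∪ 𝒜m))
    (hdBp : DependsOnSites Bp 𝒜p) (hdBm : DependsOnSites Bm 𝒜m)
    (hpos : 0 < prodProb p (Ap ∩ Am)) :
    prodProb p Bp * prodProb p Bm ≤
      prodProb p (Bp ∩ Bm ∩ (Ap ∩ Am)) / prodProb p (Ap ∩ Am) := by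
  classical
  set S : Finset V := 𝒜p ∪ 𝒜m with hSdef
  set W : (V → Bool) → ℝ := configWeight p with hWdef
  have hW0 : ∀ ω, 0 ≤ W ω := configWeight_nonneg p hp
  -- key monotonicity transfer lemmas
  have claim_up : ∀ (A : Set (V → Bool)) (T : Finset V), IncreasingEvent A →
      DependsOnSites A T → Disjoint T 𝒜m →
      ∀ ω ω' η : V → Bool, (∀ v, v ∉ 𝒜m → ω v = true → ω' v = true) →
        mergeOn S ω η ∈ A → mergeOn S ω' η ∈ A := by
    intro A T hA hdA hdis ω ω' η hup hmem
    set mid : V → Bool := fun v => if v ∈ 𝒜m then mergeOn S ω η v else mergeOn S ω' η v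
      with hmid
    have h1 : mid ∈ A := by
      refine hA (mergeOn S ω η) mid (fun v hv => ?_) hmem
      show (if v ∈ 𝒜m then mergeOn S ω η v else mergeOn S ω' η v) = true
      by_cases hm : v ∈ 𝒜m
      · rw [if_pos hm]; exact hv
      · rw [if_neg hm]
        unfold mergeOn at hv ⊢
        by_cases hvS : v ∈ S
        · rw [if_pos hvS] at hv ⊢; exact hup v hm hv
        · rw [if_neg hvS] at hv ⊢; exact hv
    refine (hdA mid (mergeOn S ω' η) (fun v hvT => ?_)).mp h1
    have hm : v ∉ 𝒜m := Finset.disjoint_left.mp hdis hvT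
    show (if v ∈ 𝒜m then mergeOn S ω η v else mergeOn S ω' η v) = _
    rw [if_neg hm]
  have claim_down : ∀ (A : Set (V → Bool)) (T : Finset V), DecreasingEvent A →
      DependsOnSites A T → (∀ v ∈ T, v ∈ 𝒜m ∨ v ∉ S) →
      ∀ ω ω' η : V → Bool, (∀ v, v ∈ 𝒜m → ω' v = true → ω v = true) →
        mergeOn S ω η ∈ A → mergeOn S ω' η ∈ A := by
    intro A T hA hdA hT ω ω' η hdown hmem
    set mid : V → Bool := fun v => if v ∈ 𝒜m then mergeOn S ω' η v else mergeOn S ω η v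
      with hmid
    have h1 : mid ∈ A := by
      refine hA (mergeOn S ω η) mid (fun v hv => ?_) hmem
      replace hv : (if v ∈ 𝒜m then mergeOn S ω' η v else mergeOn S ω η v) = true := hv
      by_cases hm : v ∈ 𝒜m
      · rw [if_pos hm] at hv
        have hvS : v ∈ S := Finset.mem_union_right _ hm
        unfold mergeOn at hv ⊢
        rw [if_pos hvS] at hv ⊢
        exact hdown v hm hv
      · rw [if_neg hm] at hv; exact hv
    refine (hdA mid (mergeOn S ω' η) (fun v hvT => ?_)).mp h1
    show (if v ∈ 𝒜m then mergeOn S ω' η v else mergeOn S ω η v) = _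
    rcases hT v hvT with hm | hS
    · rw [if_pos hm]
    · by_cases hm : v ∈ 𝒜m
      · rw [if_pos hm]
      · rw [if_neg hm]
        show mergeOn S ω η v = mergeOn S ω' η v
        unfold mergeOn
        rw [if_neg hS, if_neg hS]
  -- monotonicity of the two conditional indicators
  have hmm_a : ∀ η ω ω' : V → Bool, (∀ v, v ∉ 𝒜m → ω v = true → ω' v = true) →
      (∀ v, v ∈ 𝒜m → ω' v = true → ω v = true) →
      evInd (Bp ∩ Bm) (mergeOn S ω η) ≤ evInd (Bp ∩ Bm) (mergeOn S ω' η) := by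
    intro η ω ω' hup hdown
    refine evInd_le fun hmem => ⟨?_, ?_⟩
    · exact claim_up Bp 𝒜p hBp hdBp hd3 ω ω' η hup hmem.1
    · exact claim_down Bm 𝒜m hBm hdBm (fun v hv => Or.inl hv) ω ω' η hdown hmem.2
  have hmm_b : ∀ η ω ω' : V → Bool, (∀ v, v ∉ 𝒜m → ω v = true → ω' v = true) →
      (∀ v, v ∈ 𝒜m → ω' v = true → ω v = true) →
      evInd (Ap ∩ Am) (mergeOn S ω η) ≤ evInd (Ap ∩ Am) (mergeOn S ω' η) := by
    intro η ω ω' hup hdown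
    refine evInd_le fun hmem => ⟨?_, ?_⟩
    · exact claim_up Ap (𝒜 ∪ 𝒜p) hAp hdAp
        (Finset.disjoint_union_left.mpr ⟨hd2, hd3⟩) ω ω' η hup hmem.1
    · refine claim_down Am (𝒜 ∪ 𝒜m) hAm hdAm (fun v hv => ?_) ω ω' η hdown hmem.2
      rcases Finset.mem_union.mp hv with h𝒜 | hm
      · refine Or.inr fun hS => ?_
        rcases Finset.mem_union.mp hS with h | h
        · exact Finset.disjoint_left.mp hd1 h𝒜 h
        · exact Finset.disjoint_left.mp hd2 h𝒜 h
      · exact Or.inl hm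
  -- independence of Bp and Bm
  have hindep : ∑ ω : V → Bool, W ω * (evInd Bp ω * evInd Bm ω)
      = prodProb p Bp * prodProb p Bm := by
    rw [← resample p 𝒜p (fun ω => evInd Bp ω * evInd Bm ω), Fintype.sum_prod_type,
      prodProb_eq, prodProb_eq, Finset.sum_mul_sum]
    refine Finset.sum_congr rfl fun σ _ => Finset.sum_congr rfl fun η _ => ?_
    have e1 : evInd Bp (mergeOn 𝒜p σ η) = evInd Bp σ :=
      evInd_congr (hdBp _ _ fun v hv => if_pos hv)
    have e2 : evInd Bm (mergeOn 𝒜p σ η) = evInd Bm η :=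
      evInd_congr (hdBm _ _ fun v hv =>
        if_neg (fun hp' => Finset.disjoint_left.mp hd3 hp' hv))
    rw [e1, e2]; ring
  -- fixed-η marginal of Bp ∩ Bm
  have T3 : ∀ η : V → Bool, ∑ σ : V → Bool, W σ * evInd (Bp ∩ Bm) (mergeOn S σ η)
      = prodProb p Bp * prodProb p Bm := by
    intro η
    rw [← hindep]
    refine Finset.sum_congr rfl fun σ _ => ?_
    congr 1
    rw [evInd_inter]
    have e1 : evInd Bp (mergeOn S σ η) = evInd Bp σ :=
      evInd_congr (hdBp _ _ fun v hv => if_pos (Finset.mem_union_left _ hv))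
    have e2 : evInd Bm (mergeOn S σ η) = evInd Bm σ :=
      evInd_congr (hdBm _ _ fun v hv => if_pos (Finset.mem_union_right _ hv))
    rw [e1, e2]
  -- expansions
  have T1 : prodProb p (Ap ∩ Am) = ∑ η : V → Bool, W η *
      ∑ σ : V → Bool, W σ * evInd (Ap ∩ Am) (mergeOn S σ η) := by
    rw [prodProb_eq, ← resample p S (evInd (Ap ∩ Am)), Fintype.sum_prod_type,
      Finset.sum_comm]
    refine Finset.sum_congr rfl fun η _ => ?_
    rw [Finset.mul_sum]
    exact Finset.sum_congr rfl fun σ _ => by ring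
  have T2 : prodProb p (Bp ∩ Bm ∩ (Ap ∩ Am)) = ∑ η : V → Bool, W η *
      ∑ σ : V → Bool, W σ *
        (evInd (Bp ∩ Bm) (mergeOn S σ η) * evInd (Ap ∩ Am) (mergeOn S σ η)) := by
    rw [prodProb_eq, ← resample p S (evInd (Bp ∩ Bm ∩ (Ap ∩ Am))),
      Fintype.sum_prod_type, Finset.sum_comm]
    refine Finset.sum_congr rfl fun η _ => ?_
    rw [Finset.mul_sum]
    refine Finset.sum_congr rfl fun σ _ => ?_
    rw [evInd_inter]
    ring
  -- per-η FKG
  have T4 : ∀ η : V → Bool,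
      prodProb p Bp * prodProb p Bm * (∑ σ : V → Bool, W σ * evInd (Ap ∩ Am) (mergeOn S σ η))
        ≤ ∑ σ : V → Bool, W σ *
          (evInd (Bp ∩ Bm) (mergeOn S σ η) * evInd (Ap ∩ Am) (mergeOn S σ η)) := by
    intro η
    rw [← T3 η]
    exact harris p hp 𝒜m (fun σ => evInd (Bp ∩ Bm) (mergeOn S σ η))
      (fun σ => evInd (Ap ∩ Am) (mergeOn S σ η))
      (fun σ => evInd_nonneg _ _) (fun σ => evInd_nonneg _ _)
      (fun ω ω' h1 h2 => hmm_a η ω ω' h1 h2)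
      (fun ω ω' h1 h2 => hmm_b η ω ω' h1 h2)
  -- assemble
  have main : prodProb p Bp * prodProb p Bm * prodProb p (Ap ∩ Am)
      ≤ prodProb p (Bp ∩ Bm ∩ (Ap ∩ Am)) := by
    rw [T1, T2, Finset.mul_sum]
    refine Finset.sum_le_sum fun η _ => ?_
    calc prodProb p Bp * prodProb p Bm *
          (W η * ∑ σ : V → Bool, W σ * evInd (Ap ∩ Am) (mergeOn S σ η))
        = W η * (prodProb p Bp * prodProb p Bm *
            ∑ σ : V → Bool, W σ * evInd (Ap ∩ Am) (mergeOn S σ η)) := by ring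
      _ ≤ _ := mul_le_mul_of_nonneg_left (T4 η) (hW0 η)
  rw [le_div_iff₀ hpos]
  exact main
end

section
/- Comparison of correlation lengths via the four-arm relation: suppose for two values ε ≤ ε′ in (0,1/2) that |p − 1/2| L_ε(p)² π₄(L_ε(p)) ≍ 1 ≍ |p − 1/2| L_{ε′}(p)² π₄(L_{ε′}(p)), that π₄ is quasi-multiplicative (π₄(n)π₄(n|N) ≍ π₄(N) for n ≤ N), and that there exist α′ > 0, c > 0 with π₄(n|N) ≥ c (n/N)^{2−α′} for all n ≤ N. Then L_ε(p) ≤ C L_{ε′}(p) for a constant C independent of p; hence L_ε(p) ≍ L_{ε′}(p). -/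
/-- comparison of correlation lengths via the four-arm relation:
given the relation `|p − 1/2| L(p)² π₄(L(p)) ≍ 1` for both lengths `L_ε, L_{ε′}`
(with `ε ≤ ε′`, so `L_{ε′}(p) ≤ L_ε(p)`), quasi-multiplicativity of `π₄`
(`π₄(n)π₄(n|N) ≍ π₄(N)`), and the a-priori bound `π₄(n|N) ≥ c (n/N)^{2−α′}`,
one gets `L_ε(p) ≤ C · L_{ε′}(p)` with `C` independent of `p`; hence
`L_ε(p) ≍ L_{ε′}(p)`. -/
theorem correlation_lengths_comparable
    (D : Set ℝ) (hD : ∀ p ∈ D, p ≠ (1 / 2 : ℝ))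
    (Lε Lε' : ℝ → ℕ) (π4 : ℕ → ℝ) (π42 : ℕ → ℕ → ℝ)
    (hπ4pos : ∀ n, 0 < π4 n)
    (hLpos : ∀ p ∈ D, 0 < Lε' p)
    (hmono : ∀ p ∈ D, Lε' p ≤ Lε p)
    (c₁ c₂ : ℝ) (hc₁ : 0 < c₁) (hc₂ : 0 < c₂)
    (h1 : ∀ p ∈ D, c₁ ≤ |p - 1 / 2| * (Lε p : ℝ) ^ 2 * π4 (Lε p) ∧
      |p - 1 / 2| * (Lε p : ℝ) ^ 2 * π4 (Lε p) ≤ c₂)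
    (h2 : ∀ p ∈ D, c₁ ≤ |p - 1 / 2| * (Lε' p : ℝ) ^ 2 * π4 (Lε' p) ∧
      |p - 1 / 2| * (Lε' p : ℝ) ^ 2 * π4 (Lε' p) ≤ c₂)
    (cq : ℝ) (hcq : 0 < cq)
    (hquasi : ∀ n N : ℕ, n ≤ N →
      π4 N ≤ cq * (π4 n * π42 n N) ∧ π4 n * π42 n N ≤ cq * π4 N)
    (α' ca : ℝ) (hα' : 0 < α') (hca : 0 < ca)
    (hapriori : ∀ n N : ℕ, n ≤ N → ca * ((n : ℝ) / (N : ℝ)) ^ (2 - α') ≤ π42 n N) :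
    ∃ Cst : ℝ, 0 < Cst ∧ ∀ p ∈ D, (Lε p : ℝ) ≤ Cst * (Lε' p : ℝ) := by
  set K : ℝ := c₂ * cq / (c₁ * ca) with hK
  have hKpos : 0 < K := by positivity
  refine ⟨max 1 (K ^ (1 / α')), lt_of_lt_of_le one_pos (le_max_left _ _), ?_⟩
  intro p hp
  set n := Lε' p with hn_def
  set N := Lε p with hN_def
  have hn : 0 < n := hLpos p hp
  have hnN : n ≤ N := hmono p hp
  have hnR : (0 : ℝ) < n := by exact_mod_cast hn
  have hNR : (0 : ℝ) < N := lt_of_lt_of_le hnR (by exact_mod_cast hnN)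
  have hh : 0 < |p - 1 / 2| := abs_pos.mpr (sub_ne_zero.mpr (hD p hp))
  set r : ℝ := (n : ℝ) / (N : ℝ) with hr_def
  have hr : 0 < r := div_pos hnR hNR
  have hπn := hπ4pos n
  have hπN := hπ4pos N
  -- step 1
  have s1 : c₁ * (ca * r ^ (2 - α')) ≤ (|p - 1 / 2| * (n : ℝ) ^ 2 * π4 n) * π42 n N := by
    apply mul_le_mul (h2 p hp).1 (hapriori n N hnN) (by positivity) (by positivity)
  -- step 2
  have s2 : (|p - 1 / 2| * (n : ℝ) ^ 2 * π4 n) * π42 n N ≤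
      |p - 1 / 2| * (n : ℝ) ^ 2 * (cq * π4 N) := by
    have := (hquasi n N hnN).2
    calc (|p - 1 / 2| * (n : ℝ) ^ 2 * π4 n) * π42 n N
        = |p - 1 / 2| * (n : ℝ) ^ 2 * (π4 n * π42 n N) := by ring
      _ ≤ |p - 1 / 2| * (n : ℝ) ^ 2 * (cq * π4 N) := by
          apply mul_le_mul_of_nonneg_left this (by positivity)
  -- step 3
  have hn2 : (n : ℝ) ^ 2 = r ^ 2 * (N : ℝ) ^ 2 := by
    rw [hr_def, div_pow, div_mul_cancel₀ _ (by positivity)]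
  have s3 : |p - 1 / 2| * (n : ℝ) ^ 2 * (cq * π4 N) ≤ cq * r ^ 2 * c₂ := by
    have hb := (h1 p hp).2
    calc |p - 1 / 2| * (n : ℝ) ^ 2 * (cq * π4 N)
        = cq * r ^ 2 * (|p - 1 / 2| * (N : ℝ) ^ 2 * π4 N) := by rw [hn2]; ring
      _ ≤ cq * r ^ 2 * c₂ := by apply mul_le_mul_of_nonneg_left hb (by positivity)
  have key : c₁ * (ca * r ^ (2 - α')) ≤ cq * r ^ 2 * c₂ := le_trans s1 (le_trans s2 s3)
  -- split the rpow
  have hsplit : r ^ (2 - α') = r ^ (2 : ℕ) * r ^ (-α') := by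
    rw [← Real.rpow_natCast r 2, ← Real.rpow_add hr]
    congr 1
  -- deduce r^(-α') ≤ K
  have hKbound : r ^ (-α') ≤ K := by
    rw [hK]
    rw [le_div_iff₀ (by positivity)]
    have : c₁ * ca * (r ^ (-α') * r ^ 2) ≤ c₂ * cq * r ^ 2 := by
      calc c₁ * ca * (r ^ (-α') * r ^ 2) = c₁ * (ca * (r ^ (2 : ℕ) * r ^ (-α'))) := by
            ring
        _ = c₁ * (ca * r ^ (2 - α')) := by rw [← hsplit]
        _ ≤ cq * r ^ 2 * c₂ := key
        _ = c₂ * cq * r ^ 2 := by ring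
    have h2pos : (0 : ℝ) < r ^ 2 := by positivity
    nlinarith [Real.rpow_natCast r 2, this]
  -- x := r⁻¹ = N/n
  have hx : (r⁻¹) ^ α' ≤ K := by
    rw [← Real.rpow_neg_one r, ← Real.rpow_mul hr.le, neg_one_mul]
    exact hKbound
  have hxK : r⁻¹ ≤ K ^ (1 / α') := by
    have hx0 : (0 : ℝ) < r⁻¹ := by positivity
    have := Real.rpow_le_rpow (by positivity) hx (le_of_lt (by positivity : (0:ℝ) < 1 / α'))
    rwa [← Real.rpow_mul hx0.le, mul_one_div, div_self hα'.ne', Real.rpow_one] at this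
  have : (N : ℝ) = r⁻¹ * (n : ℝ) := by
    rw [hr_def, inv_div, div_mul_cancel₀ _ hnR.ne']
  rw [this]
  calc r⁻¹ * (n : ℝ) ≤ K ^ (1 / α') * (n : ℝ) := by
        apply mul_le_mul_of_nonneg_right hxK hnR.le
    _ ≤ max 1 (K ^ (1 / α')) * (n : ℝ) := by
        apply mul_le_mul_of_nonneg_right (le_max_right _ _) hnR.le
end
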